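/- arXiv:2012.13913 — 4 statements merged into one kernel-verified Lean document; each statement's English description precedes it below -/
import Mathlib

section
/- For every natural number n, the n-th moment of the weight W(·;a,b;c,d) is given by ∫₀¹ xⁿ W(x;a,b;c,d) dx = ((a)_n (b)_n)/((c)_n (d)_n); in particular (n = 0), W(·;a,b;c,d) is a probability density function on the interval (0,1). -/
open MeasureTheory

/-- Pochhammer symbol `(z)_n = z (z+1) ⋯ (z+n-1)`. -/
noncomputable def poch (z : ℝ) (n : ℕ) : ℝ := ∏ i ∈ Finset.range n, (z + i)

/-- Gauss hypergeometric series `₂F₁(α, β; γ; z)`. -/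
noncomputable def twoF1 (α β γ z : ℝ) : ℝ :=
  ∑' n : ℕ, (poch α n * poch β n) / (poch γ n * n.factorial) * z ^ n

/-- The weight function `W(x; a, b; c, d)`. -/
noncomputable def W (a b c d : ℝ) (x : ℝ) : ℝ :=
  (Real.Gamma c * Real.Gamma d) /
      (Real.Gamma a * Real.Gamma b * Real.Gamma (c + d - a - b)) *
    (x ^ (a - 1) * (1 - x) ^ (c + d - a - b - 1) *
      twoF1 (c - b) (d - b) (c + d - a - b) (1 - x))

/-!
Expanding `₂F₁(c-b, d-b; δ; 1-x)` and integrating termwise against the Beta kernel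
`x^(n+a-1) (1-x)^(δ-1)` (Tonelli, so in `ℝ≥0∞`) turns the `n`-th moment into
`Γ(c)Γ(d)/(Γ(a)Γ(b)Γ(δ)) · B(n+a, δ) · ₂F₁(c-b, d-b; n+a+δ; 1)`.
The value at `1` is Gauss's summation theorem, which comes from the same termwise integration
applied to `₂F₁(α, q; q; 1-x) = x^(-α)` (binomial series): there the integral is again a Beta value.
-/

open Real Set ProbabilityTheory
open scoped Nat

lemma poch_succ (z : ℝ) (n : ℕ) : poch z (n + 1) = poch z n * (z + n) :=
  Finset.prod_range_succ _ n

lemma poch_nonneg {z : ℝ} (hz : 0 ≤ z) (n : ℕ) : 0 ≤ poch z n :=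
  Finset.prod_nonneg fun _ _ => by positivity

lemma poch_pos {z : ℝ} (hz : 0 < z) (n : ℕ) : 0 < poch z n :=
  Finset.prod_pos fun _ _ => by positivity

lemma poch_eq_ascPochhammer_eval (z : ℝ) (n : ℕ) : poch z n = (ascPochhammer ℝ n).eval z := by
  induction n with
  | zero => simp [poch]
  | succ n ih => rw [poch_succ, ih, ascPochhammer_succ_eval]

lemma Gamma_add_nat_eq_mul_poch {z : ℝ} (hz : 0 < z) (n : ℕ) :
    Gamma (z + n) = Gamma z * poch z n := by
  induction n with
  | zero => simp [poch]
  | succ n ih =>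
    have : 0 < z + n := by positivity
    rw [Nat.cast_succ, ← add_assoc, Gamma_add_one this.ne', ih, poch_succ]
    ring

lemma beta_add_nat_right {p q : ℝ} (hp : 0 < p) (hq : 0 < q) (k : ℕ) :
    beta p (q + k) = beta p q * (poch q k / poch (p + q) k) := by
  have := poch_pos (add_pos hp hq) k
  have := Gamma_pos_of_pos (add_pos hp hq)
  rw [beta, beta, ← add_assoc, Gamma_add_nat_eq_mul_poch hq,
    Gamma_add_nat_eq_mul_poch (add_pos hp hq)]
  field_simp

lemma twoF1_term_eq_ordinaryHypergeometricSeries (α β γ z : ℝ) (n : ℕ) :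
    poch α n * poch β n / (poch γ n * n !) * z ^ n =
      ordinaryHypergeometricSeries ℝ α β γ n (fun _ => z) := by
  simp only [ordinaryHypergeometricSeries_apply_eq, poch_eq_ascPochhammer_eval, smul_eq_mul]
  ring

lemma summable_twoF1_terms {α β γ z : ℝ}
    (hαβγ : ∀ k : ℕ, (k : ℝ) ≠ -α ∧ (k : ℝ) ≠ -β ∧ (k : ℝ) ≠ -γ) (hz : |z| < 1) :
    Summable fun n => poch α n * poch β n / (poch γ n * n !) * z ^ n := by
  simp_rw [twoF1_term_eq_ordinaryHypergeometricSeries]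
  refine Summable.of_norm ((ordinaryHypergeometricSeries ℝ α β γ).summable_norm_apply ?_)
  rw [ordinaryHypergeometricSeries_radius_eq_one ℝ α β γ hαβγ]
  simpa [Metric.mem_eball, edist_dist] using hz

lemma measurable_twoF1 (α β γ : ℝ) : Measurable (twoF1 α β γ) :=
  Measurable.tsum fun _ => by fun_prop

lemma twoF1_nonneg {α β γ z : ℝ} (hα : 0 ≤ α) (hβ : 0 ≤ β) (hγ : 0 < γ) (hz : 0 ≤ z) :
    0 ≤ twoF1 α β γ z :=
  tsum_nonneg fun k => by
    have := poch_nonneg hα k; have := poch_nonneg hβ k; have := poch_pos hγ k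
    positivity

lemma poch_div_factorial_eq_choose (a : ℝ) (n : ℕ) :
    poch a n / n ! = Ring.choose (a + n - 1) n := by
  rw [Ring.choose_eq_smul, Polynomial.descPochhammer_smeval_eq_ascPochhammer,
    Polynomial.ascPochhammer_smeval_eq_eval, poch_eq_ascPochhammer_eval, smul_eq_mul]
  ring_nf

lemma hasSum_poch_div_factorial_mul_pow (a : ℝ) {z : ℝ} (hz : |z| < 1) :
    HasSum (fun n => poch a n / n ! * z ^ n) ((1 - z) ^ (-a)) := by
  have h := (one_div_one_sub_rpow_hasFPowerSeriesOnBall_zero a).hasSum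
    (y := z) (by simpa [Metric.mem_eball, edist_dist] using hz)
  simp only [FormalMultilinearSeries.ofScalars_apply_eq, smul_eq_mul, zero_add] at h
  rw [rpow_neg (by linarith [le_abs_self z]), inv_eq_one_div]
  simpa only [poch_div_factorial_eq_choose] using h

lemma twoF1_eq_one_sub_rpow_neg {α β z : ℝ} (hβ : 0 < β) (hz : |z| < 1) :
    twoF1 α β β z = (1 - z) ^ (-α) := by
  rw [twoF1, ← (hasSum_poch_div_factorial_mul_pow α hz).tsum_eq]
  refine tsum_congr fun n => ?_
  have := (poch_pos hβ n).ne'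
  field_simp

lemma lintegral_ofReal_eq_tsum_of_hasSum {s : Set ℝ} (hs : MeasurableSet s) {f : ℕ → ℝ → ℝ}
    {F : ℝ → ℝ} (hf : ∀ k, Measurable (f k)) (hf_nonneg : ∀ k, ∀ x ∈ s, 0 ≤ f k x)
    (hF : ∀ x ∈ s, HasSum (f · x) (F x)) :
    ∫⁻ x in s, ENNReal.ofReal (F x) = ∑' k, ∫⁻ x in s, ENNReal.ofReal (f k x) := by
  rw [← lintegral_tsum fun k => (hf k).ennreal_ofReal.aemeasurable]
  refine setLIntegral_congr_fun hs fun x hx => ?_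
  rw [← (hF x hx).tsum_eq, ENNReal.ofReal_tsum_of_nonneg (hf_nonneg · x hx) (hF x hx).summable]

lemma hasSum_of_tsum_ofReal_eq {f : ℕ → ℝ} {S : ℝ} (hf : ∀ k, 0 ≤ f k) (hS : 0 ≤ S)
    (h : ∑' k, ENNReal.ofReal (f k) = ENNReal.ofReal S) : HasSum f S := by
  have hsum : Summable f := by
    refine (NNReal.summable_coe.mpr (ENNReal.tsum_coe_ne_top_iff_summable.mp ?_)).congr
      fun k => Real.coe_toNNReal _ (hf k)
    simpa [ENNReal.ofReal] using h ▸ ENNReal.ofReal_ne_top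
  rw [← ENNReal.ofReal_tsum_of_nonneg hf hsum,
    ENNReal.ofReal_eq_ofReal_iff (tsum_nonneg hf) hS] at h
  exact h ▸ hsum.hasSum

lemma lintegral_rpow_mul_one_sub_rpow {p q : ℝ} (hp : 0 < p) (hq : 0 < q) :
    ∫⁻ x in Ioo 0 1, ENNReal.ofReal (x ^ (p - 1) * (1 - x) ^ (q - 1)) =
      ENNReal.ofReal (beta p q) := by
  have hB := beta_pos hp hq
  have h := lintegral_betaPDF_eq_one hp hq
  simp_rw [lintegral_betaPDF, mul_assoc, ENNReal.ofReal_mul (one_div_pos.mpr hB).le] at h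
  rw [lintegral_const_mul' _ _ ENNReal.ofReal_ne_top,
    ← ENNReal.eq_div_iff (by simp [hB]) ENNReal.ofReal_ne_top] at h
  rw [h, ENNReal.ofReal_div_of_pos hB]
  simp

lemma lintegral_rpow_mul_one_sub_rpow_mul_twoF1 {p q α β : ℝ} (hp : 0 < p) (hq : 0 < q)
    (hα : 0 < α) (hβ : 0 < β) :
    ∫⁻ x in Ioo 0 1, ENNReal.ofReal (x ^ (p - 1) * (1 - x) ^ (q - 1) * twoF1 α β q (1 - x)) =
      ∑' k, ENNReal.ofReal (beta p q * (poch α k * poch β k / (poch (p + q) k * k !))) := by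
  set coeff : ℕ → ℝ := fun k => poch α k * poch β k / (poch q k * k !)
  have hcoeff : ∀ k, 0 ≤ coeff k := fun k => by
    have := poch_pos hα k; have := poch_pos hβ k; have := poch_pos hq k
    positivity
  have hterm_nonneg : ∀ k : ℕ, ∀ x ∈ Ioo (0 : ℝ) 1,
      0 ≤ coeff k * (x ^ (p - 1) * (1 - x) ^ (q + k - 1)) := fun k x hx => by
    have := hx.1; have : 0 < 1 - x := by linarith [hx.2]
    have := hcoeff k
    positivity
  have hterm : ∀ x ∈ Ioo (0 : ℝ) 1, ∀ k : ℕ,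
      x ^ (p - 1) * (1 - x) ^ (q - 1) * (coeff k * (1 - x) ^ k) =
        coeff k * (x ^ (p - 1) * (1 - x) ^ (q + k - 1)) := fun x hx k => by
    rw [add_sub_right_comm, rpow_add (by linarith [hx.2]), rpow_natCast]
    ring
  have hsum : ∀ x ∈ Ioo (0 : ℝ) 1,
      HasSum (fun k => coeff k * (x ^ (p - 1) * (1 - x) ^ (q + k - 1)))
        (x ^ (p - 1) * (1 - x) ^ (q - 1) * twoF1 α β q (1 - x)) := fun x hx => by
    have hz : |1 - x| < 1 := by rw [abs_lt]; constructor <;> linarith [hx.1, hx.2]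
    have hpos : ∀ k : ℕ, (k : ℝ) ≠ -α ∧ (k : ℝ) ≠ -β ∧ (k : ℝ) ≠ -q := fun k => by
      refine ⟨?_, ?_, ?_⟩ <;> intro h <;> linarith [(k.cast_nonneg : (0 : ℝ) ≤ k)]
    rw [← funext (hterm x hx)]
    exact (summable_twoF1_terms hpos hz).hasSum.mul_left _
  rw [lintegral_ofReal_eq_tsum_of_hasSum measurableSet_Ioo (fun k => by fun_prop)
    hterm_nonneg hsum]
  refine tsum_congr fun k => ?_
  simp_rw [ENNReal.ofReal_mul (hcoeff k)]
  rw [lintegral_const_mul' _ _ ENNReal.ofReal_ne_top,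
    lintegral_rpow_mul_one_sub_rpow hp (by positivity), beta_add_nat_right hp hq,
    ← ENNReal.ofReal_mul (hcoeff k)]
  have := (poch_pos hq k).ne'
  simp only [coeff]
  field_simp

theorem hasSum_gauss {α β γ : ℝ} (hα : 0 < α) (hβ : 0 < β) (hαβγ : α + β < γ) :
    HasSum (fun k => poch α k * poch β k / (poch γ k * k !))
      (beta (γ - β - α) β / beta (γ - β) β) := by
  have hp : 0 < γ - β := by linarith
  have hpα : 0 < γ - β - α := by linarith
  have hterm_nonneg : ∀ k : ℕ,
      0 ≤ beta (γ - β) β * (poch α k * poch β k / (poch γ k * k !)) := fun k => by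
    have := poch_pos hα k; have := poch_pos hβ k; have := poch_pos (by linarith : 0 < γ) k
    have := beta_pos hp hβ
    positivity
  have h_euler := lintegral_rpow_mul_one_sub_rpow_mul_twoF1 hp hβ hα hβ
  have h_integrand : ∀ x ∈ Ioo (0 : ℝ) 1,
      x ^ (γ - β - 1) * (1 - x) ^ (β - 1) * twoF1 α β β (1 - x) =
        x ^ (γ - β - α - 1) * (1 - x) ^ (β - 1) := fun x hx => by
    have hz : |1 - x| < 1 := by rw [abs_lt]; constructor <;> linarith [hx.1, hx.2]
    rw [twoF1_eq_one_sub_rpow_neg hβ hz, sub_sub_cancel, mul_right_comm, ← rpow_add hx.1]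
    ring_nf
  rw [setLIntegral_congr_fun measurableSet_Ioo fun x hx => by rw [h_integrand x hx],
    lintegral_rpow_mul_one_sub_rpow hpα hβ, sub_add_cancel] at h_euler
  have h := (hasSum_of_tsum_ofReal_eq hterm_nonneg (beta_pos hpα hβ).le h_euler.symm).div_const
    (beta (γ - β) β)
  simpa only [mul_div_cancel_left₀ _ (beta_pos hp hβ).ne'] using h

lemma measurable_W (a b c d : ℝ) : Measurable (W a b c d) := by
  have := measurable_twoF1 (c - b) (d - b) (c + d - a - b)
  unfold W
  fun_prop

lemma W_nonneg {a b c d x : ℝ} (ha : 0 < a) (hb : 0 < b) (hcd : max a b < min c d)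
    (hx : x ∈ Ioo 0 1) : 0 ≤ W a b c d x := by
  obtain ⟨⟨hac, hbc⟩, had, hbd⟩ := And.imp max_lt_iff.mp max_lt_iff.mp (lt_min_iff.mp hcd)
  have := Gamma_pos_of_pos ha; have := Gamma_pos_of_pos hb
  have := Gamma_pos_of_pos (ha.trans hac); have := Gamma_pos_of_pos (ha.trans had)
  have := Gamma_pos_of_pos (by linarith : 0 < c + d - a - b)
  have := hx.1; have : 0 < 1 - x := by linarith [hx.2]
  have := twoF1_nonneg (by linarith : 0 ≤ c - b) (by linarith : 0 ≤ d - b)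
    (by linarith : 0 < c + d - a - b) this.le
  unfold W
  positivity

lemma W_moment_closed_form {a b c d : ℝ} (ha : 0 < a) (hb : 0 < b) (hcd : max a b < min c d)
    (n : ℕ) :
    Gamma c * Gamma d / (Gamma a * Gamma b * Gamma (c + d - a - b)) *
        (beta (n + a) (c + d - a - b) * (beta (b + n) (d - b) / beta (c + n) (d - b))) =
      poch a n * poch b n / (poch c n * poch d n) := by
  obtain ⟨⟨hac, hbc⟩, had, hbd⟩ := And.imp max_lt_iff.mp max_lt_iff.mp (lt_min_iff.mp hcd)
  simp only [beta]
  rw [show b + n + (d - b) = d + n by ring,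
    show (n : ℝ) + a + (c + d - a - b) = c + n + (d - b) by ring,
    add_comm (n : ℝ) a, Gamma_add_nat_eq_mul_poch ha, Gamma_add_nat_eq_mul_poch hb,
    Gamma_add_nat_eq_mul_poch (ha.trans hac), Gamma_add_nat_eq_mul_poch (ha.trans had)]
  have := Gamma_pos_of_pos ha; have := Gamma_pos_of_pos hb
  have := Gamma_pos_of_pos (ha.trans hac); have := Gamma_pos_of_pos (ha.trans had)
  have := Gamma_pos_of_pos (by linarith : 0 < c + d - a - b)
  have := Gamma_pos_of_pos (by linarith : 0 < d - b)
  have := Gamma_pos_of_pos (by linarith [n.cast_nonneg (α := ℝ)] : 0 < c + n + (d - b))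
  have := poch_pos (ha.trans hac) n; have := poch_pos (ha.trans had) n
  field_simp

lemma lintegral_pow_mul_W {a b c d : ℝ} (ha : 0 < a) (hb : 0 < b) (hcd : max a b < min c d)
    (n : ℕ) :
    ∫⁻ x in Ioo 0 1, ENNReal.ofReal (x ^ n * W a b c d x) =
      ENNReal.ofReal (poch a n * poch b n / (poch c n * poch d n)) := by
  obtain ⟨⟨hac, hbc⟩, had, hbd⟩ := And.imp max_lt_iff.mp max_lt_iff.mp (lt_min_iff.mp hcd)
  set δ := c + d - a - b with hδ_def
  have hδ : 0 < δ := by linarith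
  have hp : 0 < n + a := by positivity
  set C := Gamma c * Gamma d / (Gamma a * Gamma b * Gamma δ)
  have hC : 0 ≤ C := by
    have := Gamma_pos_of_pos ha; have := Gamma_pos_of_pos hb
    have := Gamma_pos_of_pos (ha.trans hac); have := Gamma_pos_of_pos (ha.trans had)
    have := Gamma_pos_of_pos hδ
    positivity
  have h_integrand : ∀ x ∈ Ioo (0 : ℝ) 1, x ^ n * W a b c d x =
      C * (x ^ (n + a - 1) * (1 - x) ^ (δ - 1) * twoF1 (c - b) (d - b) δ (1 - x)) :=
    fun x hx => by
      rw [W, show (n : ℝ) + a - 1 = n + (a - 1) by ring, rpow_add hx.1, rpow_natCast]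
      ring
  have h_gauss := (hasSum_gauss (by linarith : 0 < c - b) (by linarith : 0 < d - b)
    (by linarith : c - b + (d - b) < n + a + δ)).mul_left (beta (n + a) δ)
  rw [show n + a + δ - (d - b) - (c - b) = b + n by rw [hδ_def]; ring,
    show n + a + δ - (d - b) = c + n by rw [hδ_def]; ring] at h_gauss
  have h_gauss_nonneg : ∀ k : ℕ,
      0 ≤ beta (n + a) δ * (poch (c - b) k * poch (d - b) k / (poch (n + a + δ) k * k !)) :=
    fun k => by
      have := beta_pos hp hδ; have := poch_pos (by linarith : 0 < c - b) k
      have := poch_pos (by linarith : 0 < d - b) k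
      have := poch_pos (by linarith : 0 < n + a + δ) k
      positivity
  rw [setLIntegral_congr_fun measurableSet_Ioo fun x hx => by rw [h_integrand x hx]]
  simp_rw [ENNReal.ofReal_mul hC]
  rw [lintegral_const_mul' _ _ ENNReal.ofReal_ne_top,
    lintegral_rpow_mul_one_sub_rpow_mul_twoF1 hp hδ (by linarith) (by linarith),
    ← ENNReal.ofReal_tsum_of_nonneg h_gauss_nonneg h_gauss.summable, h_gauss.tsum_eq,
    ← ENNReal.ofReal_mul hC, W_moment_closed_form ha hb hcd]

lemma integral_pow_mul_W {a b c d : ℝ} (ha : 0 < a) (hb : 0 < b) (hcd : max a b < min c d)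
    (n : ℕ) :
    ∫ x in Ioo 0 1, x ^ n * W a b c d x = poch a n * poch b n / (poch c n * poch d n) := by
  obtain ⟨⟨hac, -⟩, had, -⟩ := And.imp max_lt_iff.mp max_lt_iff.mp (lt_min_iff.mp hcd)
  have h_nonneg : 0 ≤ᵐ[volume.restrict (Ioo 0 1)] fun x => x ^ n * W a b c d x :=
    ae_restrict_of_forall_mem measurableSet_Ioo fun x hx =>
      mul_nonneg (pow_nonneg hx.1.le n) (W_nonneg ha hb hcd hx)
  rw [integral_eq_lintegral_of_nonneg_ae h_nonneg
      (by have := measurable_W a b c d; fun_prop : Measurable _).aestronglyMeasurable,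
    lintegral_pow_mul_W ha hb hcd, ENNReal.toReal_ofReal]
  have := poch_pos ha n; have := poch_pos hb n
  have := poch_pos (ha.trans hac) n; have := poch_pos (ha.trans had) n
  positivity

theorem moments_of_hypergeometric_weight_general (a b c d : ℝ)
    (ha : 0 < a) (hb : 0 < b)
    (hcd : max a b < min c d) :
    (∀ n : ℕ, ∫ x in Set.Ioo (0 : ℝ) 1, x ^ n * W a b c d x =
      (poch a n * poch b n) / (poch c n * poch d n)) ∧
    (∀ x ∈ Set.Ioo (0 : ℝ) 1, 0 ≤ W a b c d x) ∧
    (∫ x in Set.Ioo (0 : ℝ) 1, W a b c d x) = 1 :=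
  ⟨integral_pow_mul_W ha hb hcd, fun _ hx => W_nonneg ha hb hcd hx,
    by simpa [poch] using integral_pow_mul_W ha hb hcd 0⟩

/-- Moments of the weight `W(·;a,b;c,d)`; in particular (`n = 0`, together with the
nonnegativity of the weight) it is a probability density function on `(0,1)`. -/
theorem moments_of_hypergeometric_weight (a b c d : ℝ)
    (ha : 0 < a) (hb : 0 < b) (hc : 0 < c) (hd : 0 < d)
    (hcd : max a b < min c d) :
    (∀ n : ℕ, ∫ x in Set.Ioo (0 : ℝ) 1, x ^ n * W a b c d x =
      (poch a n * poch b n) / (poch c n * poch d n)) ∧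
    (∀ x ∈ Set.Ioo (0 : ℝ) 1, 0 ≤ W a b c d x) ∧
    (∫ x in Set.Ioo (0 : ℝ) 1, W a b c d x) = 1 :=
  moments_of_hypergeometric_weight_general a b c d ha hb hcd
end

section
/- Hahn property for the type II polynomials: for every n ∈ ℕ and every x, (d/dx) P_{n+1}(x;a,b;c,d) = (n+1) · P_n(x;a+1,b+1;d+1,c+2), i.e. the derivative of the (n+1)-st type II polynomial with parameters (a,b;c,d) equals (n+1) times the n-th type II polynomial with shifted parameters (a+1,b+1;d+1,c+2). -/
/-!
Differentiate the explicit sum for `P_{n+1}` term by term. The `j`-th term picks up the factor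
`n + 1 - j`, and `C(n+1, j) (n+1-j) = (n+1) C(n, j)`. In the Pochhammer symbols,
`a + (n+1) - j = (a+1) + n - j`, and likewise for `b`. Since `⌊(n+1)/2⌋ = ⌊(n-1)/2⌋ + 1` and
`⌊n/2⌋ = ⌊((n+1)-1)/2⌋`, the lower parameters `c, d` of degree `n + 1` become `d + 1, c + 2` of
degree `n`.
-/

open Finset

/-- The type II multiple orthogonal polynomial of degree `n` on the step line,
`P_n(x;a,b;c,d) = Σ_{j=0}^{n} C(n,j)(−1)^j ((a+n−j)_j (b+n−j)_j) /
  ((c+⌊n/2⌋+n−j)_j (d+⌊(n−1)/2⌋+n−j)_j) · x^{n−j}`. -/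
noncomputable def P (a b c d : ℝ) (n : ℕ) (x : ℝ) : ℝ :=
  ∑ j ∈ Finset.range (n + 1),
    (n.choose j : ℝ) * (-1 : ℝ) ^ j *
      (poch (a + n - j) j * poch (b + n - j) j) /
      (poch (c + (n / 2 : ℕ) + n - j) j * poch (d + ((n - 1) / 2 : ℕ) + n - j) j) *
      x ^ (n - j)

theorem hasDerivAt_sum_mul_pow_sub {𝕜 : Type*} [NontriviallyNormedField 𝕜]
    (A : ℕ → 𝕜) (n : ℕ) (x : 𝕜) :
    HasDerivAt (fun y => ∑ j ∈ range (n + 2), A j * y ^ (n + 1 - j))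
      (∑ j ∈ range (n + 1), A j * ((n + 1 - j : ℕ) * x ^ (n - j))) x := by
  have h : HasDerivAt (fun y => ∑ j ∈ range (n + 2), A j * y ^ (n + 1 - j))
      (∑ j ∈ range (n + 2), A j * ((n + 1 - j : ℕ) * x ^ (n + 1 - j - 1))) x :=
    HasDerivAt.fun_sum fun j _ => (hasDerivAt_pow (n + 1 - j) x).const_mul (A j)
  rw [sum_range_succ, Nat.sub_self, Nat.cast_zero, zero_mul, mul_zero, add_zero] at h
  convert h using 1
  refine sum_congr rfl fun j _ => ?_
  rw [Nat.sub_sub, Nat.add_sub_add_right]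

noncomputable def coeffP (a b c d : ℝ) (n j : ℕ) : ℝ :=
  (n.choose j : ℝ) * (-1 : ℝ) ^ j *
    (poch (a + n - j) j * poch (b + n - j) j) /
    (poch (c + (n / 2 : ℕ) + n - j) j * poch (d + ((n - 1) / 2 : ℕ) + n - j) j)

theorem P_eq_sum_coeffP (a b c d : ℝ) (n : ℕ) :
    P a b c d n = fun x => ∑ j ∈ range (n + 1), coeffP a b c d n j * x ^ (n - j) :=
  rfl

theorem coeffP_succ_mul (a b c d : ℝ) {n j : ℕ} (hj : j ≤ n) :
    coeffP a b c d (n + 1) j * (n + 1 - j : ℕ) =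
      (n + 1) * coeffP (a + 1) (b + 1) (d + 1) (c + 2) n j := by
  rcases n with _ | m
  · obtain rfl : j = 0 := Nat.le_zero.mp hj
    simp [coeffP, poch]
  have hfloor : (((m + 1 + 1) / 2 : ℕ) : ℝ) = (((m + 1 - 1) / 2 : ℕ) : ℝ) + 1 := by
    norm_cast; omega
  have hchoose : ((m + 1 + 1).choose j : ℝ) * (m + 1 + 1 - j : ℕ) =
      (m + 1 + 1) * (m + 1).choose j := by
    exact_mod_cast (Nat.choose_mul_succ_eq (m + 1) j).symm.trans (mul_comm _ _)
  simp only [coeffP, hfloor, Nat.add_sub_cancel]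
  push_cast
  rw [show a + ((m : ℝ) + 1 + 1) - j = a + 1 + ((m : ℝ) + 1) - j by ring,
    show b + ((m : ℝ) + 1 + 1) - j = b + 1 + ((m : ℝ) + 1) - j by ring,
    show c + (((m / 2 : ℕ) : ℝ) + 1) + ((m : ℝ) + 1 + 1) - j =
      c + 2 + ((m / 2 : ℕ) : ℝ) + ((m : ℝ) + 1) - j by ring,
    show d + (((m + 1) / 2 : ℕ) : ℝ) + ((m : ℝ) + 1 + 1) - j =
      d + 1 + (((m + 1) / 2 : ℕ) : ℝ) + ((m : ℝ) + 1) - j by ring]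
  linear_combination (-1 : ℝ) ^ j *
    (poch (a + 1 + ((m : ℝ) + 1) - j) j * poch (b + 1 + ((m : ℝ) + 1) - j) j) /
    (poch (c + 2 + ((m / 2 : ℕ) : ℝ) + ((m : ℝ) + 1) - j) j *
      poch (d + 1 + (((m + 1) / 2 : ℕ) : ℝ) + ((m : ℝ) + 1) - j) j) * hchoose

theorem hahn_property_typeII_general (a b c d : ℝ) :
    ∀ (n : ℕ) (x : ℝ),
      deriv (P a b c d (n + 1)) x =
        (n + 1) * P (a + 1) (b + 1) (d + 1) (c + 2) n x := by
  intro n x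
  rw [P_eq_sum_coeffP, (hasDerivAt_sum_mul_pow_sub _ n x).deriv, P_eq_sum_coeffP, mul_sum]
  refine sum_congr rfl fun j hj => ?_
  rw [← mul_assoc, coeffP_succ_mul a b c d (Nat.lt_succ_iff.mp (mem_range.mp hj)), mul_assoc]

/-- Hahn property for the type II polynomials:
`(d/dx) P_{n+1}(x;a,b;c,d) = (n+1) · P_n(x;a+1,b+1;d+1,c+2)`. -/
theorem hahn_property_typeII (a b c d : ℝ)
    (ha : 0 < a) (hb : 0 < b) (hc : 0 < c) (hd : 0 < d)
    (hcd : max a b < min c d) :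
    ∀ (n : ℕ) (x : ℝ),
      deriv (P a b c d (n + 1)) x =
        (n + 1) * P (a + 1) (b + 1) (d + 1) (c + 2) n x :=
  hahn_property_typeII_general a b c d
end

section
/- Branched-continued-fraction form of the recurrence coefficients: assume additionally d ≠ 1. With λ_k as in the context and β_n, α_{n+1}, γ_{n+1} the recurrence coefficients from the third-order recurrence of the polynomials P_n(x;a,b;c,d), one has for every n ∈ ℕ: β_n = λ_{3n} + λ_{3n+1} + λ_{3n+2}; α_{n+1} = λ_{3n+1}λ_{3n+3} + λ_{3n+2}λ_{3n+3} + λ_{3n+2}λ_{3n+4}; and γ_{n+1} = λ_{3n+2} λ_{3n+4} λ_{3n+6}. Moreover λ_0 = λ_1 = 0 and λ_k > 0 for all k ≥ 2. -/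
/-- The auxiliary parameters `c'_m` (for integers `m ≥ -1`): `c'_{2k-1} = c + k` and
`c'_{2k} = d + k`. -/
noncomputable def cp (c d : ℝ) (m : ℤ) : ℝ :=
  if m % 2 = 0 then d + (m / 2 : ℤ) else c + ((m + 1) / 2 : ℤ)

/-- The recurrence coefficient `β_n`. -/
noncomputable def betaC (a b c d : ℝ) (n : ℕ) : ℝ :=
  ((n : ℝ) + 1) * (a + n) * (b + n) /
      ((cp c d ((n : ℤ) - 1) + n) * (cp c d (n : ℤ) + n)) -
    (n : ℝ) * (a + n - 1) * (b + n - 1) /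
      ((cp c d ((n : ℤ) - 1) + n - 1) * (cp c d (n : ℤ) + n - 2))

/-- The recurrence coefficient `α_{n+1}`. -/
noncomputable def alphaC (a b c d : ℝ) (n : ℕ) : ℝ :=
  (((n : ℝ) + 1) * (a + n) * (b + n) /
      ((cp c d ((n : ℤ) - 1) + n) * (cp c d (n : ℤ) + n))) *
    ((n : ℝ) * (a + n - 1) * (b + n - 1) /
        (2 * (cp c d ((n : ℤ) - 1) + n - 1) * (cp c d (n : ℤ) + n - 1)) -
      ((n : ℝ) + 1) * (a + n) * (b + n) /
        ((cp c d ((n : ℤ) - 1) + n) * (cp c d (n : ℤ) + n)) +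
      ((n : ℝ) + 2) * (a + n + 1) * (b + n + 1) /
        (2 * (cp c d ((n : ℤ) - 1) + n + 1) * (cp c d (n : ℤ) + n + 1)))

/-- The recurrence coefficient `γ_{n+1}`. -/
noncomputable def gammaC (a b c d : ℝ) (n : ℕ) : ℝ :=
  (poch ((n : ℝ) + 1) 2 * poch (a + n) 2 * poch (b + n) 2 *
      (cp c d (n : ℤ) - 1) * (cp c d (n : ℤ) - a) * (cp c d (n : ℤ) - b)) /
    (poch (cp c d ((n : ℤ) - 1) + n) 3 * poch (cp c d (n : ℤ) + n) 3 *
      poch (cp c d (n : ℤ) + n - 1) 3)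

/-- The branched-continued-fraction coefficients `λ_k`: for `k = 3n`, `3n+1`, `3n+2`
they are given by the three formulas of the paper. -/
noncomputable def lam (a b c d : ℝ) (k : ℕ) : ℝ :=
  let n : ℕ := k / 3
  if k % 3 = 0 then
    (n : ℝ) * (b + n - 1) * (cp c d (n : ℤ) - a - 1) /
      ((cp c d (n : ℤ) + n - 2) * (cp c d (n : ℤ) + n - 1) *
        (cp c d ((n : ℤ) - 1) + n - 1))
  else if k % 3 = 1 then
    (n : ℝ) * (a + n) * (cp c d ((n : ℤ) - 1) - b) /
      ((cp c d (n : ℤ) + n - 1) * (cp c d ((n : ℤ) - 1) + n - 1) *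
        (cp c d ((n : ℤ) - 1) + n))
  else
    (a + n) * (b + n) * (cp c d (n : ℤ) - 1) /
      ((cp c d (n : ℤ) + n - 1) * (cp c d (n : ℤ) + n) *
        (cp c d ((n : ℤ) - 1) + n))

/-!
Once `c'_{m+2} = c'_m + 1` is used to write `c'_{n+1} = c'_{n-1} + 1` and `c'_{n+2} = c'_n + 1`,
every `λ_k` with `3n ≤ k ≤ 3n + 6` is a rational function of `n`, `c'_{n-1}` and `c'_n`, and the
three formulas become identities of rational functions in these quantities. Positivity follows from
`c'_m ≥ min c d + ⌊(m + 1)/2⌋`. For `n = 0` some denominators (`c - 1`, `d - 2`) may vanish, but only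
under a factor `n`, while `λ_2 = ab(d - 1)/((d - 1)dc)` would be `0/0` at `d = 1`.
-/

lemma poch_two (z : ℝ) : poch z 2 = z * (z + 1) := by
  simp [poch, Finset.prod_range_succ]

lemma poch_three (z : ℝ) : poch z 3 = z * (z + 1) * (z + 2) := by
  simp [poch, Finset.prod_range_succ, mul_assoc]

section cp

variable (c d : ℝ)

@[simp] lemma cp_zero : cp c d 0 = d := by simp [cp]

@[simp] lemma cp_neg_one : cp c d (-1) = c := by simp [cp]

lemma cp_add_two (m : ℤ) : cp c d (m + 2) = cp c d m + 1 := by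
  have hmod : (m + 2) % 2 = m % 2 := by omega
  have hdiv : (m + 2) / 2 = m / 2 + 1 := by omega
  have hdiv' : (m + 2 + 1) / 2 = (m + 1) / 2 + 1 := by omega
  simp only [cp, hmod, hdiv, hdiv']
  split_ifs <;> push_cast <;> ring

lemma min_add_le_cp (m : ℤ) : min c d + ((m + 1) / 2 : ℤ) ≤ cp c d m := by
  unfold cp
  split_ifs with h
  · have : (m + 1) / 2 = m / 2 := by omega
    rw [this]
    linarith [min_le_right c d]
  · linarith [min_le_left c d]

lemma min_le_cp_natCast_sub_one (n : ℕ) : min c d ≤ cp c d ((n : ℤ) - 1) := by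
  have h := min_add_le_cp c d ((n : ℤ) - 1)
  have : (0 : ℤ) ≤ ((n : ℤ) - 1 + 1) / 2 := by omega
  have : (0 : ℝ) ≤ (((n : ℤ) - 1 + 1) / 2 : ℤ) := by exact_mod_cast this
  linarith

lemma min_add_one_le_cp_natCast {n : ℕ} (hn : 1 ≤ n) : min c d + 1 ≤ cp c d n := by
  have h := min_add_le_cp c d n
  have : (1 : ℤ) ≤ ((n : ℤ) + 1) / 2 := by omega
  have : (1 : ℝ) ≤ (((n : ℤ) + 1) / 2 : ℤ) := by exact_mod_cast this
  linarith

end cp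

section lam

variable (a b c d : ℝ) (n : ℕ)

lemma lam_three_mul : lam a b c d (3 * n) =
    (n : ℝ) * (b + n - 1) * (cp c d n - a - 1) /
      ((cp c d n + n - 2) * (cp c d n + n - 1) * (cp c d ((n : ℤ) - 1) + n - 1)) := by
  have h₁ : 3 * n % 3 = 0 := by omega
  have h₂ : 3 * n / 3 = n := by omega
  simp only [lam, h₁, h₂, if_true]

lemma lam_three_mul_add_one : lam a b c d (3 * n + 1) =
    (n : ℝ) * (a + n) * (cp c d ((n : ℤ) - 1) - b) /
      ((cp c d n + n - 1) * (cp c d ((n : ℤ) - 1) + n - 1) * (cp c d ((n : ℤ) - 1) + n)) := by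
  have h₁ : (3 * n + 1) % 3 = 1 := by omega
  have h₂ : (3 * n + 1) / 3 = n := by omega
  simp only [lam, h₁, h₂]
  norm_num

lemma lam_three_mul_add_two : lam a b c d (3 * n + 2) =
    (a + n) * (b + n) * (cp c d n - 1) /
      ((cp c d n + n - 1) * (cp c d n + n) * (cp c d ((n : ℤ) - 1) + n)) := by
  have h₁ : (3 * n + 2) % 3 = 2 := by omega
  have h₂ : (3 * n + 2) / 3 = n := by omega
  simp only [lam, h₁, h₂]
  norm_num

lemma lam_three_mul_add_three : lam a b c d (3 * n + 3) =
    ((n : ℝ) + 1) * (b + n) * (cp c d ((n : ℤ) - 1) - a) /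
      ((cp c d ((n : ℤ) - 1) + n) * (cp c d ((n : ℤ) - 1) + n + 1) * (cp c d n + n)) := by
  rw [show 3 * n + 3 = 3 * (n + 1) by ring, lam_three_mul,
    show ((n + 1 : ℕ) : ℤ) = (n : ℤ) - 1 + 2 by push_cast; ring, cp_add_two,
    show (n : ℤ) - 1 + 2 - 1 = n by ring]
  push_cast
  ring

lemma lam_three_mul_add_four : lam a b c d (3 * n + 4) =
    ((n : ℝ) + 1) * (a + n + 1) * (cp c d n - b) /
      ((cp c d ((n : ℤ) - 1) + n + 1) * (cp c d n + n) * (cp c d n + n + 1)) := by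
  rw [show 3 * n + 4 = 3 * (n + 1) + 1 by ring, lam_three_mul_add_one,
    show ((n + 1 : ℕ) : ℤ) = (n : ℤ) - 1 + 2 by push_cast; ring, cp_add_two,
    show (n : ℤ) - 1 + 2 - 1 = n by ring]
  push_cast
  ring

lemma lam_three_mul_add_six : lam a b c d (3 * n + 6) =
    ((n : ℝ) + 2) * (b + n + 1) * (cp c d n - a) /
      ((cp c d n + n + 1) * (cp c d n + n + 2) * (cp c d ((n : ℤ) - 1) + n + 2)) := by
  rw [show 3 * n + 6 = 3 * (n + 2) by ring, lam_three_mul,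
    show ((n + 2 : ℕ) : ℤ) = (n : ℤ) + 2 by push_cast; ring, cp_add_two,
    show (n : ℤ) + 2 - 1 = (n : ℤ) - 1 + 2 by ring, cp_add_two]
  push_cast
  ring

lemma lam_zero : lam a b c d 0 = 0 := by
  simpa using lam_three_mul a b c d 0

lemma lam_one : lam a b c d 1 = 0 := by
  simpa using lam_three_mul_add_one a b c d 0

end lam

section identities

variable {a b c d : ℝ}

lemma betaC_eq_sum_lam (hc : 0 < c) (hd : 0 < d) (hd1 : d ≠ 1) (n : ℕ) :
    betaC a b c d n = lam a b c d (3 * n) + lam a b c d (3 * n + 1) + lam a b c d (3 * n + 2) := by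
  rw [betaC, lam_three_mul, lam_three_mul_add_one, lam_three_mul_add_two]
  rcases Nat.eq_zero_or_pos n with rfl | hn
  · have : d - 1 ≠ 0 := sub_ne_zero.2 hd1
    simp only [Nat.cast_zero, zero_sub, cp_zero, cp_neg_one, add_zero, zero_mul, zero_div,
      zero_add]
    field_simp
    ring
  · have he := min_add_one_le_cp_natCast c d hn
    have hf := min_le_cp_natCast_sub_one c d n
    have hm : 0 < min c d := lt_min hc hd
    have hN : (1 : ℝ) ≤ n := by exact_mod_cast hn
    have h₁ : cp c d n + n - 2 ≠ 0 := by linarith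
    have h₂ : cp c d n + n - 1 ≠ 0 := by linarith
    have h₃ : cp c d n + n ≠ 0 := by linarith
    have h₄ : cp c d ((n : ℤ) - 1) + n - 1 ≠ 0 := by linarith
    have h₅ : cp c d ((n : ℤ) - 1) + n ≠ 0 := by linarith
    field_simp
    ring

lemma alphaC_eq_sum_lam_mul_lam (hc : 0 < c) (hd : 0 < d) (hd1 : d ≠ 1) (n : ℕ) :
    alphaC a b c d n =
      lam a b c d (3 * n + 1) * lam a b c d (3 * n + 3) +
        lam a b c d (3 * n + 2) * lam a b c d (3 * n + 3) +
        lam a b c d (3 * n + 2) * lam a b c d (3 * n + 4) := by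
  rw [alphaC, lam_three_mul_add_one, lam_three_mul_add_two, lam_three_mul_add_three,
    lam_three_mul_add_four]
  rcases Nat.eq_zero_or_pos n with rfl | hn
  · have : d - 1 ≠ 0 := sub_ne_zero.2 hd1
    simp only [Nat.cast_zero, zero_sub, cp_zero, cp_neg_one, add_zero, zero_mul, zero_div,
      zero_add]
    field_simp
    ring
  · have he := min_add_one_le_cp_natCast c d hn
    have hf := min_le_cp_natCast_sub_one c d n
    have hm : 0 < min c d := lt_min hc hd
    have hN : (1 : ℝ) ≤ n := by exact_mod_cast hn
    have h₁ : cp c d n + n - 1 ≠ 0 := by linarith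
    have h₂ : cp c d n + n ≠ 0 := by linarith
    have h₃ : cp c d n + n + 1 ≠ 0 := by linarith
    have h₄ : cp c d ((n : ℤ) - 1) + n - 1 ≠ 0 := by linarith
    have h₅ : cp c d ((n : ℤ) - 1) + n ≠ 0 := by linarith
    have h₆ : cp c d ((n : ℤ) - 1) + n + 1 ≠ 0 := by linarith
    field_simp
    ring

lemma gammaC_eq_prod_lam (n : ℕ) :
    gammaC a b c d n =
      lam a b c d (3 * n + 2) * lam a b c d (3 * n + 4) * lam a b c d (3 * n + 6) := by
  rw [gammaC, lam_three_mul_add_two, lam_three_mul_add_four, lam_three_mul_add_six]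
  simp only [poch_two, poch_three]
  rw [div_mul_div_comm, div_mul_div_comm]
  ring

end identities

section positivity

variable {a b c d : ℝ}

lemma lam_three_mul_pos (hc : 0 < c) (hd : 0 < d) (hb : 0 < b) (hac : a < min c d)
    {n : ℕ} (hn : 1 ≤ n) : 0 < lam a b c d (3 * n) := by
  have he := min_add_one_le_cp_natCast c d hn
  have hf := min_le_cp_natCast_sub_one c d n
  have hm : 0 < min c d := lt_min hc hd
  have hN : (1 : ℝ) ≤ n := by exact_mod_cast hn
  rw [lam_three_mul]
  refine div_pos (mul_pos (mul_pos ?_ ?_) ?_) (mul_pos (mul_pos ?_ ?_) ?_) <;> linarith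

lemma lam_three_mul_add_one_pos (hc : 0 < c) (hd : 0 < d) (ha : 0 < a) (hbc : b < min c d)
    {n : ℕ} (hn : 1 ≤ n) : 0 < lam a b c d (3 * n + 1) := by
  have he := min_add_one_le_cp_natCast c d hn
  have hf := min_le_cp_natCast_sub_one c d n
  have hm : 0 < min c d := lt_min hc hd
  have hN : (1 : ℝ) ≤ n := by exact_mod_cast hn
  rw [lam_three_mul_add_one]
  refine div_pos (mul_pos (mul_pos ?_ ?_) ?_) (mul_pos (mul_pos ?_ ?_) ?_) <;> linarith

lemma lam_three_mul_add_two_pos (hc : 0 < c) (hd : 0 < d) (ha : 0 < a) (hb : 0 < b)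
    (hd1 : d ≠ 1) (n : ℕ) : 0 < lam a b c d (3 * n + 2) := by
  rw [lam_three_mul_add_two]
  rcases Nat.eq_zero_or_pos n with rfl | hn
  · have : d - 1 ≠ 0 := sub_ne_zero.2 hd1
    simp only [Nat.cast_zero, zero_sub, cp_zero, cp_neg_one, add_zero]
    rw [show a * b * (d - 1) / ((d - 1) * d * c) = a * b / (d * c) by field_simp]
    positivity
  · have he := min_add_one_le_cp_natCast c d hn
    have hf := min_le_cp_natCast_sub_one c d n
    have hm : 0 < min c d := lt_min hc hd
    have hN : (0 : ℝ) ≤ n := n.cast_nonneg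
    refine div_pos (mul_pos (mul_pos ?_ ?_) ?_) (mul_pos (mul_pos ?_ ?_) ?_) <;> linarith

lemma lam_pos (ha : 0 < a) (hb : 0 < b) (hc : 0 < c) (hd : 0 < d) (hcd : max a b < min c d)
    (hd1 : d ≠ 1) {k : ℕ} (hk : 2 ≤ k) : 0 < lam a b c d k := by
  obtain ⟨hac, hbc⟩ := max_lt_iff.1 hcd
  obtain ⟨n, rfl | rfl | rfl⟩ : ∃ n, k = 3 * n ∨ k = 3 * n + 1 ∨ k = 3 * n + 2 :=
    ⟨k / 3, by omega⟩
  · exact lam_three_mul_pos hc hd hb hac (by omega)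
  · exact lam_three_mul_add_one_pos hc hd ha hbc (by omega)
  · exact lam_three_mul_add_two_pos hc hd ha hb hd1 n

end positivity

/-- Branched-continued-fraction form of the recurrence coefficients:
`β_n = λ_{3n} + λ_{3n+1} + λ_{3n+2}`,
`α_{n+1} = λ_{3n+1}λ_{3n+3} + λ_{3n+2}λ_{3n+3} + λ_{3n+2}λ_{3n+4}`,
`γ_{n+1} = λ_{3n+2}λ_{3n+4}λ_{3n+6}`; moreover `λ_0 = λ_1 = 0` and `λ_k > 0` for
`k ≥ 2`. -/
theorem bcf_form_of_recurrence_coefficients (a b c d : ℝ)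
    (ha : 0 < a) (hb : 0 < b) (hc : 0 < c) (hd : 0 < d)
    (hcd : max a b < min c d) (hd1 : d ≠ 1) :
    (∀ n : ℕ, betaC a b c d n =
      lam a b c d (3 * n) + lam a b c d (3 * n + 1) + lam a b c d (3 * n + 2)) ∧
    (∀ n : ℕ, alphaC a b c d n =
      lam a b c d (3 * n + 1) * lam a b c d (3 * n + 3) +
        lam a b c d (3 * n + 2) * lam a b c d (3 * n + 3) +
        lam a b c d (3 * n + 2) * lam a b c d (3 * n + 4)) ∧
    (∀ n : ℕ, gammaC a b c d n =
      lam a b c d (3 * n + 2) * lam a b c d (3 * n + 4) * lam a b c d (3 * n + 6)) ∧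
    lam a b c d 0 = 0 ∧ lam a b c d 1 = 0 ∧
    (∀ k : ℕ, 2 ≤ k → 0 < lam a b c d k) :=
  ⟨betaC_eq_sum_lam hc hd hd1, alphaC_eq_sum_lam_mul_lam hc hd hd1, gammaC_eq_prod_lam,
    lam_zero a b c d, lam_one a b c d, fun _ hk => lam_pos ha hb hc hd hcd hd1 hk⟩
end

section
/- Mehler–Heine asymptotic formula near the origin: for every z ∈ ℂ, lim_{n→∞} (−1)^n · ( (c+⌊n/2⌋)_n (d+⌊(n−1)/2⌋)_n ) / ( (a)_n (b)_n ) · P_n(z/n³; a,b;c,d) = ₀F₂(−; a, b; −z/4) := Σ_{k=0}^∞ (−z/4)^k / ( (a)_k (b)_k k! ), and the convergence is uniform on compact subsets of ℂ. -/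
/-- Complex Pochhammer symbol `(z)_n = z (z+1) ⋯ (z+n-1)`. -/
noncomputable def pochC (z : ℂ) (n : ℕ) : ℂ := ∏ i ∈ Finset.range n, (z + i)

/-- The type II multiple orthogonal polynomial of degree `n` on the step line,
regarded as a polynomial function of a complex variable. -/
noncomputable def PC (a b c d : ℝ) (n : ℕ) (z : ℂ) : ℂ :=
  ∑ j ∈ Finset.range (n + 1),
    (n.choose j : ℂ) * (-1 : ℂ) ^ j *
      (pochC ((a : ℂ) + n - j) j * pochC ((b : ℂ) + n - j) j) /
      (pochC ((c : ℂ) + (n / 2 : ℕ) + n - j) j *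
        pochC ((d : ℂ) + ((n - 1) / 2 : ℕ) + n - j) j) *
      z ^ (n - j)

/-- The generalised hypergeometric series `₀F₂(−; a, b; w) = Σ w^k/((a)_k (b)_k k!)`. -/
noncomputable def F02 (a b : ℝ) (w : ℂ) : ℂ :=
  ∑' k : ℕ, w ^ k / (pochC a k * pochC b k * (k.factorial : ℂ))

open Filter

/-! After the substitution `x = z / n³` and the normalization, the coefficient of `z^k` is
`(-1)^k C(n,k) (c+⌊n/2⌋)_k (d+⌊(n-1)/2⌋)_k / (n^{3k} (a)_k (b)_k)`. Since
`C(n,k) ~ n^k / k!` and both shifted Pochhammer symbols are `~ (n/2)^k`, it tends to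
`(-1/4)^k / ((a)_k (b)_k k!)`, the coefficient of `z^k` in `₀F₂(−; a, b; −z/4)`. Uniformly in
`n ≥ 1` it is bounded by `((c+2)(d+2)/(ab))^k / k!`, which is summable against `R^k`, so
Tannery's theorem (dominated convergence for series) gives uniform convergence on every disc
`|z| ≤ R`. -/

open Topology

theorem tendstoUniformlyOn_tsum_mul_pow_of_dominated {𝕜 : Type*} [NormedField 𝕜]
    [CompleteSpace 𝕜]
    {t : ℕ → ℕ → 𝕜} {l : ℕ → 𝕜} {M : ℕ → ℝ} {R : ℝ}
    (hM : Summable fun k => M k * R ^ k) (hlim : ∀ k, Tendsto (t · k) atTop (𝓝 (l k)))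
    (hbound : ∀ᶠ n in atTop, ∀ k, ‖t n k‖ ≤ M k) :
    TendstoUniformlyOn (fun n z => ∑' k, t n k * z ^ k) (fun z => ∑' k, l k * z ^ k) atTop
      (Metric.closedBall 0 R) := by
  rcases lt_or_ge R 0 with hR | hR
  · simp [Metric.closedBall_eq_empty.2 hR, tendstoUniformlyOn_empty]
  have hl (k : ℕ) : ‖l k‖ ≤ M k :=
    le_of_tendsto (hlim k).norm (hbound.mono fun n hn => hn k)
  have hdiff : ∀ᶠ n in atTop, ∀ k, ‖t n k - l k‖ * R ^ k ≤ 2 * (M k * R ^ k) :=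
    hbound.mono fun n hn k => by
      have := (norm_sub_le (t n k) (l k)).trans (add_le_add (hn k) (hl k))
      nlinarith [pow_nonneg hR k]
  have hD : Tendsto (fun n => ∑' k, ‖t n k - l k‖ * R ^ k) atTop (𝓝 0) := by
    simpa using tendsto_tsum_of_dominated_convergence (hM.mul_left 2)
      (fun k => ((hlim k).sub_const (l k)).norm.mul_const (R ^ k))
      (hdiff.mono fun n hn k => by simpa [abs_of_nonneg hR] using hn k)
  rw [Metric.tendstoUniformlyOn_iff]
  intro ε hε
  filter_upwards [hD.eventually (gt_mem_nhds hε), hbound, hdiff] with n hDn hbn hdn z hz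
  have hzk (k : ℕ) : ‖z ^ k‖ ≤ R ^ k := by
    rw [norm_pow]
    exact pow_le_pow_left₀ (norm_nonneg z) (by simpa using hz) k
  have hsumm {s : ℕ → 𝕜} (hs : ∀ k, ‖s k‖ ≤ M k) : Summable fun k => s k * z ^ k :=
    hM.of_norm_bounded fun k => by
      rw [norm_mul]; exact mul_le_mul (hs k) (hzk k) (norm_nonneg _) ((norm_nonneg _).trans (hs k))
  calc dist (∑' k, l k * z ^ k) (∑' k, t n k * z ^ k)
      = ‖∑' k, (t n k - l k) * z ^ k‖ := by
        rw [dist_comm, dist_eq_norm, ← (hsumm hbn).tsum_sub (hsumm hl)]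
        simp_rw [sub_mul]
    _ ≤ ∑' k, ‖t n k - l k‖ * R ^ k := by
        refine tsum_of_norm_bounded
          ((hM.mul_left 2).of_nonneg_of_le (fun k => by positivity) hdn).hasSum fun k => ?_
        rw [norm_mul]; exact mul_le_mul_of_nonneg_left (hzk k) (norm_nonneg _)
    _ < ε := hDn

noncomputable def pochR (x : ℝ) (n : ℕ) : ℝ := ∏ i ∈ Finset.range n, (x + i)

@[simp, norm_cast]
theorem ofReal_pochR (x : ℝ) (n : ℕ) : ((pochR x n : ℝ) : ℂ) = pochC x n := by
  simp [pochC, pochR]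

theorem pochR_pos {x : ℝ} (hx : 0 < x) (n : ℕ) : 0 < pochR x n :=
  Finset.prod_pos fun i _ => by positivity

theorem pow_le_pochR {x : ℝ} (hx : 0 ≤ x) (n : ℕ) : x ^ n ≤ pochR x n := by
  simpa [pochR] using Finset.prod_le_prod (s := Finset.range n) (fun _ _ => hx)
    fun i _ => le_add_of_nonneg_right (Nat.cast_nonneg i)

theorem pochR_le_pow {x : ℝ} (hx : 0 ≤ x) {n : ℕ} {y : ℝ} (hy : x + (n - 1 : ℝ) ≤ y) :
    pochR x n ≤ y ^ n := by
  simpa [pochR] using Finset.prod_le_prod (s := Finset.range n) (fun i _ => by positivity)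
    fun i hi => show x + i ≤ y by
      have : (i : ℝ) + 1 ≤ n := by exact_mod_cast Finset.mem_range.1 hi
      linarith

theorem pochC_add (z : ℂ) (k m : ℕ) : pochC z (k + m) = pochC z k * pochC (z + k) m := by
  rw [pochC, Finset.prod_range_add]
  congr 1
  refine Finset.prod_congr rfl fun i _ => ?_
  push_cast
  ring

theorem pochC_ne_zero {z : ℂ} (hz : 0 < z.re) (n : ℕ) : pochC z n ≠ 0 :=
  Finset.prod_ne_zero_iff.2 fun i _ h => by
    have := congrArg Complex.re h
    simp only [Complex.add_re, Complex.natCast_re, Complex.zero_re] at this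
    linarith [(Nat.cast_nonneg i : (0 : ℝ) ≤ i)]

theorem neg_one_pow_mul_neg_one_pow_sub {R : Type*} [Monoid R] [HasDistribNeg R] {k n : ℕ}
    (hk : k ≤ n) : (-1 : R) ^ n * (-1) ^ (n - k) = (-1) ^ k := by
  rw [← pow_add, show n + (n - k) = k + 2 * (n - k) by omega, pow_add, pow_mul, neg_one_sq,
    one_pow, mul_one]

noncomputable def normalizedCoeff (a b c d : ℝ) (n k : ℕ) : ℝ :=
  (-1) ^ k * n.choose k * pochR (c + (n / 2 : ℕ)) k * pochR (d + ((n - 1) / 2 : ℕ)) k /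
    ((n : ℝ) ^ (3 * k) * pochR a k * pochR b k)

theorem normalizedCoeff_eq_zero_of_lt {a b c d : ℝ} {n k : ℕ} (h : n < k) :
    normalizedCoeff a b c d n k = 0 := by
  simp [normalizedCoeff, Nat.choose_eq_zero_of_lt h]

theorem normalized_PC_eq_sum {a b c d : ℝ} (ha : 0 < a) (hb : 0 < b) (hc : 0 < c) (hd : 0 < d)
    (n : ℕ) (z : ℂ) :
    (-1 : ℂ) ^ n *
        (pochC ((c : ℂ) + (n / 2 : ℕ)) n * pochC ((d : ℂ) + ((n - 1) / 2 : ℕ)) n) /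
        (pochC (a : ℂ) n * pochC (b : ℂ) n) *
        PC a b c d n (z / (n : ℂ) ^ 3)
      = ∑ k ∈ Finset.range (n + 1), (normalizedCoeff a b c d n k : ℂ) * z ^ k := by
  rw [PC, Finset.mul_sum, ← Finset.sum_range_reflect]
  -- in the `j = n - k` term, splitting `(w)_n = (w)_k (w + k)_{n-k}` cancels `(w + k)_{n-k}`
  refine Finset.sum_congr rfl fun k hk => ?_
  have hkn : k ≤ n := Nat.lt_succ_iff.1 (Finset.mem_range.1 hk)
  have hsplit (w : ℂ) : pochC w n = pochC w k * pochC (w + k) (n - k) := by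
    rw [← pochC_add, Nat.add_sub_cancel' hkn]
  have hshift (w : ℂ) : w + n - ((n - k : ℕ) : ℂ) = w + k := by
    rw [Nat.cast_sub hkn]; ring
  rw [Nat.add_sub_cancel, Nat.choose_symm hkn, Nat.sub_sub_self hkn, hshift, hshift, hshift, hshift,
    hsplit, hsplit (a : ℂ), hsplit (b : ℂ), hsplit (_ + _), normalizedCoeff]
  push_cast
  rw [div_pow, ← pow_mul, ← neg_one_pow_mul_neg_one_pow_sub (R := ℂ) hkn]
  have := pochC_ne_zero (z := a) (by simpa using ha) k
  have := pochC_ne_zero (z := b) (by simpa using hb) k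
  have := pochC_ne_zero (z := a + k) (by simp; positivity) (n - k)
  have := pochC_ne_zero (z := b + k) (by simp; positivity) (n - k)
  have := pochC_ne_zero (z := c + (n / 2 : ℕ) + k) (by simp; positivity) (n - k)
  have := pochC_ne_zero (z := d + ((n - 1) / 2 : ℕ) + k) (by simp; positivity) (n - k)
  field_simp

theorem normalized_PC_eq_tsum {a b c d : ℝ} (ha : 0 < a) (hb : 0 < b) (hc : 0 < c) (hd : 0 < d)
    (n : ℕ) (z : ℂ) :
    (-1 : ℂ) ^ n *
        (pochC ((c : ℂ) + (n / 2 : ℕ)) n * pochC ((d : ℂ) + ((n - 1) / 2 : ℕ)) n) /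
        (pochC (a : ℂ) n * pochC (b : ℂ) n) *
        PC a b c d n (z / (n : ℂ) ^ 3)
      = ∑' k, (normalizedCoeff a b c d n k : ℂ) * z ^ k := by
  rw [normalized_PC_eq_sum ha hb hc hd, tsum_eq_sum]
  intro k hk
  rw [normalizedCoeff_eq_zero_of_lt (by simpa using hk), Complex.ofReal_zero, zero_mul]

theorem tendsto_natCast_div_self_of_two_mul_le (g : ℕ → ℕ)
    (hg : ∀ n, 2 * g n ≤ n ∧ n ≤ 2 * g n + 2) :
    Tendsto (fun n => (g n : ℝ) / n) atTop (𝓝 (1 / 2)) := by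
  refine tendsto_of_tendsto_of_tendsto_of_le_of_le' (g := fun n : ℕ => 1 / 2 - 1 / (n : ℝ))
    (by simpa using
      (tendsto_const_nhds (x := (1 / 2 : ℝ))).sub tendsto_one_div_atTop_nhds_zero_nat)
    tendsto_const_nhds ?_ ?_
  all_goals
    filter_upwards [eventually_gt_atTop 0] with n hn
    have hn' : (0 : ℝ) < n := by exact_mod_cast hn
    have h1 : 2 * (g n : ℝ) ≤ n := by exact_mod_cast (hg n).1
    have h2 : (n : ℝ) ≤ 2 * g n + 2 := by exact_mod_cast (hg n).2
  · rw [sub_le_iff_le_add, ← add_div, le_div_iff₀ hn']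
    linarith
  · rw [div_le_iff₀ hn']
    linarith

theorem tendsto_pochR_add_div_pow (x : ℝ) (k : ℕ) {m : ℕ → ℝ} {L : ℝ}
    (hm : Tendsto (fun n => m n / n) atTop (𝓝 L)) :
    Tendsto (fun n : ℕ => pochR (x + m n) k / (n : ℝ) ^ k) atTop (𝓝 (L ^ k)) := by
  have hfactor (i : ℕ) : Tendsto (fun n : ℕ => (x + m n + i) / n) atTop (𝓝 L) := by
    simpa using ((tendsto_const_div_atTop_nhds_zero_nat (x + i)).add hm).congr fun n => by ring
  simpa [pochR, Finset.prod_div_distrib] using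
    tendsto_finsetProd (Finset.range k) fun i _ => hfactor i

noncomputable def limitCoeff (a b : ℝ) (k : ℕ) : ℝ :=
  (-1 / 4) ^ k / (pochR a k * pochR b k * k.factorial)

theorem F02_neg_div_four_eq_tsum (a b : ℝ) (z : ℂ) :
    F02 a b (-z / 4) = ∑' k, (limitCoeff a b k : ℂ) * z ^ k :=
  tsum_congr fun k => by
    rw [limitCoeff]
    push_cast
    ring

theorem tendsto_normalizedCoeff {a b : ℝ} (ha : 0 < a) (hb : 0 < b) (c d : ℝ) (k : ℕ) :
    Tendsto (fun n => normalizedCoeff a b c d n k) atTop (𝓝 (limitCoeff a b k)) := by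
  have hchoose : Tendsto (fun n : ℕ => (n.choose k : ℝ) * (1 / n) ^ k) atTop
      (𝓝 (1 / k.factorial)) := by
    simpa using ProbabilityTheory.tendsto_choose_mul_pow_atTop (p := fun n : ℕ => 1 / (n : ℝ))
      (r := 1) k (tendsto_const_nhds.congr' <| (eventually_ne_atTop 0).mono fun n hn => by
        field_simp)
  have hhalf := tendsto_pochR_add_div_pow c k
    (tendsto_natCast_div_self_of_two_mul_le (· / 2) fun n => by omega)
  have hhalf' := tendsto_pochR_add_div_pow d k
    (tendsto_natCast_div_self_of_two_mul_le (fun n => (n - 1) / 2) fun n => by omega)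
  have hpa := pochR_pos ha k
  have hpb := pochR_pos hb k
  have hlim : limitCoeff a b k = (-1) ^ k / (pochR a k * pochR b k) *
      (1 / k.factorial * (1 / 2) ^ k * (1 / 2) ^ k) := by
    have hquarter : (-1 / 4 : ℝ) ^ k = (-1) ^ k * (1 / 2) ^ k * (1 / 2) ^ k := by
      rw [← mul_pow, ← mul_pow]; norm_num
    rw [limitCoeff, hquarter]
    field_simp
  rw [hlim]
  refine Tendsto.congr' ?_ (((hchoose.mul hhalf).mul hhalf').const_mul _)
  filter_upwards [eventually_ne_atTop 0] with n hn
  have hn' : (n : ℝ) ≠ 0 := by exact_mod_cast hn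
  simp only [normalizedCoeff, one_div, inv_pow]
  field_simp
  ring

theorem abs_normalizedCoeff_le {a b c d : ℝ} (ha : 0 < a) (hb : 0 < b) (hc : 0 < c) (hd : 0 < d)
    {n : ℕ} (hn : 1 ≤ n) (k : ℕ) :
    |normalizedCoeff a b c d n k| ≤ ((c + 2) * (d + 2) / (a * b)) ^ k / k.factorial := by
  rcases lt_or_ge n k with hnk | hkn
  · rw [normalizedCoeff_eq_zero_of_lt hnk, abs_zero]
    positivity
  have hn' : (1 : ℝ) ≤ n := by exact_mod_cast hn
  have hkn' : (k : ℝ) ≤ n := by exact_mod_cast hkn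
  have hshift {x : ℝ} (hx : 0 < x) {m : ℕ} (hm : m ≤ n) :
      pochR (x + m) k ≤ ((x + 2) * n) ^ k := by
    have hm' : (m : ℝ) ≤ n := by exact_mod_cast hm
    exact pochR_le_pow (by positivity) (by nlinarith)
  have hpa := pochR_pos ha k
  have hpb := pochR_pos hb k
  have hpc := pochR_pos (x := c + (n / 2 : ℕ)) (by positivity) k
  have hpd := pochR_pos (x := d + ((n - 1) / 2 : ℕ)) (by positivity) k
  rw [normalizedCoeff, abs_div, abs_mul, abs_mul, abs_mul, abs_pow, abs_neg, abs_one, one_pow,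
    one_mul, Nat.abs_cast, abs_of_pos hpc, abs_of_pos hpd, abs_of_pos (by positivity)]
  calc _ ≤ (n : ℝ) ^ k / k.factorial * ((c + 2) * n) ^ k * ((d + 2) * n) ^ k /
        ((n : ℝ) ^ (3 * k) * a ^ k * b ^ k) := by
        gcongr
        · exact Nat.choose_le_pow_div k n
        · exact hshift hc (Nat.div_le_self n 2)
        · exact hshift hd ((Nat.div_le_self _ 2).trans (Nat.sub_le n 1))
        · exact pow_le_pochR ha.le k
        · exact pow_le_pochR hb.le k
    _ = _ := by
        simp only [div_pow, mul_pow]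
        field_simp
        ring

theorem summable_pow_div_factorial_mul_pow (x R : ℝ) :
    Summable fun k => x ^ k / k.factorial * R ^ k :=
  (Real.summable_pow_div_factorial (x * R)).congr fun k => by rw [mul_pow]; ring

theorem mehler_heine_general (a b c d : ℝ)
    (ha : 0 < a) (hb : 0 < b) (hc : 0 < c) (hd : 0 < d) :
    (∀ z : ℂ, Tendsto (fun n : ℕ =>
        (-1 : ℂ) ^ n *
          (pochC ((c : ℂ) + (n / 2 : ℕ)) n * pochC ((d : ℂ) + ((n - 1) / 2 : ℕ)) n) /
          (pochC (a : ℂ) n * pochC (b : ℂ) n) *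
          PC a b c d n (z / (n : ℂ) ^ 3))
      atTop (nhds (F02 a b (-z / 4)))) ∧
    (∀ K : Set ℂ, IsCompact K →
      TendstoUniformlyOn (fun (n : ℕ) (z : ℂ) =>
        (-1 : ℂ) ^ n *
          (pochC ((c : ℂ) + (n / 2 : ℕ)) n * pochC ((d : ℂ) + ((n - 1) / 2 : ℕ)) n) /
          (pochC (a : ℂ) n * pochC (b : ℂ) n) *
          PC a b c d n (z / (n : ℂ) ^ 3))
        (fun z => F02 a b (-z / 4)) atTop K) := by
  simp only [normalized_PC_eq_tsum ha hb hc hd, F02_neg_div_four_eq_tsum]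
  have hU (K : Set ℂ) (hK : IsCompact K) :
      TendstoUniformlyOn (fun n z => ∑' k, (normalizedCoeff a b c d n k : ℂ) * z ^ k)
        (fun z => ∑' k, (limitCoeff a b k : ℂ) * z ^ k) atTop K := by
    obtain ⟨R, hKR⟩ := hK.isBounded.subset_closedBall 0
    refine TendstoUniformlyOn.mono ?_ hKR
    refine tendstoUniformlyOn_tsum_mul_pow_of_dominated
      (summable_pow_div_factorial_mul_pow ((c + 2) * (d + 2) / (a * b)) R)
      (fun k => (tendsto_normalizedCoeff ha hb c d k).ofReal) ?_
    filter_upwards [eventually_ge_atTop 1] with n hn k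
    rw [Complex.norm_real, Real.norm_eq_abs]
    exact abs_normalizedCoeff_le ha hb hc hd hn k
  exact ⟨fun z => (hU {z} isCompact_singleton).tendsto_at rfl, hU⟩

/-- Mehler–Heine asymptotic formula near the origin:
`(−1)^n (c+⌊n/2⌋)_n (d+⌊(n−1)/2⌋)_n / ((a)_n (b)_n) · P_n(z/n³) → ₀F₂(−;a,b;−z/4)`,
pointwise on `ℂ` and uniformly on compact subsets of `ℂ`. -/
theorem mehler_heine (a b c d : ℝ)
    (ha : 0 < a) (hb : 0 < b) (hc : 0 < c) (hd : 0 < d)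
    (hcd : max a b < min c d) :
    (∀ z : ℂ, Tendsto (fun n : ℕ =>
        (-1 : ℂ) ^ n *
          (pochC ((c : ℂ) + (n / 2 : ℕ)) n * pochC ((d : ℂ) + ((n - 1) / 2 : ℕ)) n) /
          (pochC (a : ℂ) n * pochC (b : ℂ) n) *
          PC a b c d n (z / (n : ℂ) ^ 3))
      atTop (nhds (F02 a b (-z / 4)))) ∧
    (∀ K : Set ℂ, IsCompact K →
      TendstoUniformlyOn (fun (n : ℕ) (z : ℂ) =>
        (-1 : ℂ) ^ n *
          (pochC ((c : ℂ) + (n / 2 : ℕ)) n * pochC ((d : ℂ) + ((n - 1) / 2 : ℕ)) n) /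
          (pochC (a : ℂ) n * pochC (b : ℂ) n) *
          PC a b c d n (z / (n : ℂ) ^ 3))
        (fun z => F02 a b (-z / 4)) atTop K) :=
  mehler_heine_general a b c d ha hb hc hd
end
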